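/- Let a > 0. For every nonnegative integer n, ∑_{x=0}^∞ (e^{-a} a^x / x!) C_n^{(a)}(x−1) = (−1)^n, where the sum runs over the nonnegative integers x and converges absolutely. -/
import Mathlib


/-- Generalized binomial coefficient `x(x-1)⋯(x-k+1)/k!`. -/
noncomputable def genChoose (x : ℝ) (k : ℕ) : ℝ :=
  (∏ j ∈ Finset.range k, (x - (j : ℝ))) / (Nat.factorial k : ℝ)

/-- The Charlier polynomial `C_n^{(a)}(x) = ∑_{k=0}^n (x choose k) (-a)^{n-k}/(n-k)!`. -/
noncomputable def charlier (a : ℝ) (n : ℕ) (x : ℝ) : ℝ :=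
  ∑ k ∈ Finset.range (n + 1),
    genChoose x k * (-a) ^ (n - k) / (Nat.factorial (n - k) : ℝ)

/-- Charlier polynomial with integer index, with the convention `C_{-1}^{(a)} ≡ 0`. -/
noncomputable def charlierZ (a : ℝ) (n : ℤ) (x : ℝ) : ℝ :=
  if 0 ≤ n then charlier a n.toNat x else 0

/-- Forward difference operator `Δf(x) = f(x+1) - f(x)`. -/
def fdiff (f : ℝ → ℝ) : ℝ → ℝ := fun x => f (x + 1) - f x

/-- Backward difference operator `∇f(x) = f(x) - f(x-1)`. -/
def bdiff (f : ℝ → ℝ) : ℝ → ℝ := fun x => f x - f (x - 1)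

/-- The generalized Charlier polynomial
`C_n^{a,N}(x) = [1 + N(-1)^n C_n^{(a)}(-1)] C_n^{(a)}(x) - N(-1)^n C_n^{(a)}(0) C_n^{(a)}(x-1)`. -/
noncomputable def genCharlier (a N : ℝ) (n : ℕ) (x : ℝ) : ℝ :=
  (1 + N * (-1) ^ n * charlier a n (-1)) * charlier a n x
    - N * (-1) ^ n * charlier a n 0 * charlier a n (x - 1)

/-- The coefficient `A_i(x)` (for `i ≥ 1`) of the difference equation. -/
noncomputable def Acoef (a : ℝ) (i : ℕ) (x : ℝ) : ℝ :=
  ∑ k ∈ Finset.Icc 1 i, (-1 : ℝ) ^ k * charlier (-a) (i - k) (-x + 1) *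
    (charlier a k (-1) * charlier a k (x - 2) - charlier a k (-2) * charlier a k (x - 1))

/-- The coefficient `A_0 = (-1)^{n-1} C_{n-1}^{(a)}(-2)` (with `C_{-1}^{(a)} ≡ 0`). -/
noncomputable def A0coef (a : ℝ) (n : ℕ) : ℝ :=
  (-1 : ℝ) ^ ((n : ℤ) - 1) * charlierZ a ((n : ℤ) - 1) (-2)

lemma genChoose_pascal (x : ℝ) (k : ℕ) :
    genChoose x (k + 1) - genChoose (x - 1) (k + 1) = genChoose (x - 1) k := by
  unfold genChoose
  have h1 : ∏ j ∈ Finset.range (k + 1), (x - (j : ℝ))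
      = x * ∏ j ∈ Finset.range k, (x - 1 - (j : ℝ)) := by
    rw [Finset.prod_range_succ']
    rw [Nat.cast_zero, sub_zero, mul_comm]
    congr 1
    refine Finset.prod_congr rfl fun j _ => ?_
    push_cast; ring
  have h2 : ∏ j ∈ Finset.range (k + 1), (x - 1 - (j : ℝ))
      = (∏ j ∈ Finset.range k, (x - 1 - (j : ℝ))) * (x - 1 - k) := by
    rw [Finset.prod_range_succ]
  rw [h1, h2, Nat.factorial_succ]
  have hk : (Nat.factorial k : ℝ) ≠ 0 := Nat.cast_ne_zero.mpr (Nat.factorial_ne_zero k)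
  have hk1 : ((k : ℝ) + 1) ≠ 0 := by positivity
  push_cast
  field_simp
  ring

lemma genChoose_zero (x : ℝ) : genChoose x 0 = 1 := by simp [genChoose]

lemma charlier_zero (a x : ℝ) : charlier a 0 x = 1 := by
  simp [charlier, genChoose]

lemma charlier_sub (a x : ℝ) (n : ℕ) :
    charlier a (n + 1) x - charlier a (n + 1) (x - 1) = charlier a n (x - 1) := by
  unfold charlier
  rw [← Finset.sum_sub_distrib, Finset.sum_range_succ']
  have h0 : genChoose x 0 * (-a) ^ (n + 1 - 0) / (Nat.factorial (n + 1 - 0) : ℝ) -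
      genChoose (x - 1) 0 * (-a) ^ (n + 1 - 0) / (Nat.factorial (n + 1 - 0) : ℝ) = 0 := by
    simp [genChoose_zero]
  rw [h0, add_zero]
  refine Finset.sum_congr rfl fun k hk => ?_
  have hP := genChoose_pascal x k
  have : n + 1 - (k + 1) = n - k := by omega
  rw [this]
  have : genChoose x (k+1) * (-a) ^ (n-k) / (Nat.factorial (n-k) : ℝ) -
      genChoose (x-1) (k+1) * (-a) ^ (n-k) / (Nat.factorial (n-k) : ℝ)
      = (genChoose x (k+1) - genChoose (x-1) (k+1)) * (-a) ^ (n-k) / (Nat.factorial (n-k) : ℝ) := by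
    ring
  rw [this, hP]

lemma descprod (m k : ℕ) :
    (∏ j ∈ Finset.range k, (((m : ℝ) + k) - j)) =
      (Nat.factorial (m + k) : ℝ) / (Nat.factorial m : ℝ) := by
  induction k with
  | zero =>
    simp only [Finset.range_zero, Finset.prod_empty, Nat.add_zero]
    rw [div_self (Nat.cast_ne_zero.mpr (Nat.factorial_ne_zero m))]
  | succ k ih =>
    rw [Finset.prod_range_succ']
    push_cast
    have h1 : (∏ j ∈ Finset.range k, ((m : ℝ) + ((k : ℝ) + 1) - ((j : ℝ) + 1)))
        = ∏ j ∈ Finset.range k, ((m : ℝ) + k - j) := by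
      refine Finset.prod_congr rfl fun j _ => ?_
      ring
    rw [h1, ih]
    have hm : (Nat.factorial m : ℝ) ≠ 0 := Nat.cast_ne_zero.mpr (Nat.factorial_ne_zero m)
    have : m + (k + 1) = (m + k) + 1 := by omega
    rw [this, Nat.factorial_succ]
    push_cast
    field_simp
    ring

lemma genChoose_nat_zero {x k : ℕ} (h : x < k) : genChoose (x : ℝ) k = 0 := by
  unfold genChoose
  rw [Finset.prod_eq_zero (Finset.mem_range.mpr h) (by simp)]
  simp

lemma exp_tsum (a : ℝ) : (∑' n : ℕ, a ^ n / (Nat.factorial n : ℝ)) = Real.exp a := by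
  rw [Real.exp_eq_exp_ℝ, NormedSpace.exp_eq_tsum_div]

lemma wgen (a : ℝ) (k : ℕ) :
    Summable (fun x : ℕ => Real.exp (-a) * a ^ x / (Nat.factorial x : ℝ) * genChoose (x : ℝ) k)
    ∧ (∑' x : ℕ, Real.exp (-a) * a ^ x / (Nat.factorial x : ℝ) * genChoose (x : ℝ) k)
      = a ^ k / (Nat.factorial k : ℝ) := by
  set f : ℕ → ℝ := fun x => Real.exp (-a) * a ^ x / (Nat.factorial x : ℝ) * genChoose (x : ℝ) k
    with hf
  have hshift : ∀ m : ℕ, f (m + k) =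
      (a ^ k / (Nat.factorial k : ℝ)) * (Real.exp (-a) * (a ^ m / (Nat.factorial m : ℝ))) := by
    intro m
    have hg : genChoose ((m + k : ℕ) : ℝ) k = (Nat.factorial (m + k) : ℝ) /
        ((Nat.factorial m : ℝ) * (Nat.factorial k : ℝ)) := by
      unfold genChoose
      have : (∏ j ∈ Finset.range k, (((m + k : ℕ) : ℝ) - j))
          = ∏ j ∈ Finset.range k, (((m : ℝ) + k) - j) := by
        refine Finset.prod_congr rfl fun j _ => ?_; push_cast; ring
      rw [this, descprod]
      field_simp
    simp only [hf, hg]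
    have hmk : (Nat.factorial (m + k) : ℝ) ≠ 0 := Nat.cast_ne_zero.mpr (Nat.factorial_ne_zero _)
    have hm : (Nat.factorial m : ℝ) ≠ 0 := Nat.cast_ne_zero.mpr (Nat.factorial_ne_zero m)
    have hk : (Nat.factorial k : ℝ) ≠ 0 := Nat.cast_ne_zero.mpr (Nat.factorial_ne_zero k)
    rw [pow_add]
    field_simp
  have hw : Summable (fun m : ℕ => Real.exp (-a) * (a ^ m / (Nat.factorial m : ℝ))) :=
    (Real.summable_pow_div_factorial a).mul_left _
  have hsum : Summable f := by
    rw [← summable_nat_add_iff k]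
    simpa only [hshift] using hw.mul_left (a ^ k / (Nat.factorial k : ℝ))
  refine ⟨hsum, ?_⟩
  have h0 : ∀ x ∈ Finset.range k, f x = 0 := by
    intro x hx
    simp only [hf, genChoose_nat_zero (Finset.mem_range.mp hx), mul_zero]
  have := Summable.sum_add_tsum_nat_add k hsum
  rw [← this, Finset.sum_eq_zero h0, zero_add]
  calc (∑' m : ℕ, f (m + k))
      = ∑' m : ℕ, (a ^ k / (Nat.factorial k : ℝ)) *
          (Real.exp (-a) * (a ^ m / (Nat.factorial m : ℝ))) := by
        exact tsum_congr hshift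
    _ = (a ^ k / (Nat.factorial k : ℝ)) * (Real.exp (-a) *
          ∑' m : ℕ, a ^ m / (Nat.factorial m : ℝ)) := by
        rw [tsum_mul_left, tsum_mul_left]
    _ = a ^ k / (Nat.factorial k : ℝ) := by
        rw [exp_tsum, ← Real.exp_add]
        simp

lemma binom_vanish (a : ℝ) (n : ℕ) :
    (∑ k ∈ Finset.range (n + 1),
      a ^ k / (Nat.factorial k : ℝ) * ((-a) ^ (n - k) / (Nat.factorial (n - k) : ℝ)))
    = if n = 0 then 1 else 0 := by
  have key : (∑ k ∈ Finset.range (n + 1),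
      a ^ k / (Nat.factorial k : ℝ) * ((-a) ^ (n - k) / (Nat.factorial (n - k) : ℝ)))
      * (Nat.factorial n : ℝ) = (a + (-a)) ^ n := by
    rw [add_pow, Finset.sum_mul]
    refine Finset.sum_congr rfl fun k hk => ?_
    have hkn : k ≤ n := Nat.lt_succ_iff.mp (Finset.mem_range.mp hk)
    have hc : ((n.choose k : ℝ)) * (Nat.factorial k : ℝ) * (Nat.factorial (n - k) : ℝ)
        = (Nat.factorial n : ℝ) := by
      exact_mod_cast Nat.choose_mul_factorial_mul_factorial hkn
    have hk1 : (Nat.factorial k : ℝ) ≠ 0 := Nat.cast_ne_zero.mpr (Nat.factorial_ne_zero k)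
    have hk2 : (Nat.factorial (n - k) : ℝ) ≠ 0 := Nat.cast_ne_zero.mpr (Nat.factorial_ne_zero _)
    rw [← hc]
    field_simp
  have hn : (Nat.factorial n : ℝ) ≠ 0 := Nat.cast_ne_zero.mpr (Nat.factorial_ne_zero n)
  have := key
  rw [add_neg_cancel] at this
  rcases Nat.eq_zero_or_pos n with h | h
  · subst h; simpa using this
  · rw [zero_pow (Nat.pos_iff_ne_zero.mp h)] at this
    simp only [if_neg (Nat.pos_iff_ne_zero.mp h)]
    exact (mul_eq_zero.mp this).resolve_right hn

lemma wcharlier (a : ℝ) (n : ℕ) :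
    Summable (fun x : ℕ => Real.exp (-a) * a ^ x / (Nat.factorial x : ℝ) * charlier a n (x : ℝ))
    ∧ (∑' x : ℕ, Real.exp (-a) * a ^ x / (Nat.factorial x : ℝ) * charlier a n (x : ℝ))
      = if n = 0 then 1 else 0 := by
  have heq : ∀ x : ℕ, Real.exp (-a) * a ^ x / (Nat.factorial x : ℝ) * charlier a n (x : ℝ)
      = ∑ k ∈ Finset.range (n + 1),
        (Real.exp (-a) * a ^ x / (Nat.factorial x : ℝ) * genChoose (x : ℝ) k) *
          ((-a) ^ (n - k) / (Nat.factorial (n - k) : ℝ)) := by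
    intro x
    unfold charlier
    rw [Finset.mul_sum]
    exact Finset.sum_congr rfl fun k _ => by ring
  have hsummand : ∀ k ∈ Finset.range (n + 1), Summable (fun x : ℕ =>
      (Real.exp (-a) * a ^ x / (Nat.factorial x : ℝ) * genChoose (x : ℝ) k) *
        ((-a) ^ (n - k) / (Nat.factorial (n - k) : ℝ))) := by
    intro k _
    exact (wgen a k).1.mul_right _
  constructor
  · rw [show (fun x : ℕ => Real.exp (-a) * a ^ x / (Nat.factorial x : ℝ) * charlier a n (x : ℝ))
      = fun x : ℕ => ∑ k ∈ Finset.range (n + 1),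
        (Real.exp (-a) * a ^ x / (Nat.factorial x : ℝ) * genChoose (x : ℝ) k) *
          ((-a) ^ (n - k) / (Nat.factorial (n - k) : ℝ)) from funext heq]
    exact summable_sum hsummand
  · rw [tsum_congr heq, Summable.tsum_finsetSum hsummand, ← binom_vanish a n]
    refine Finset.sum_congr rfl fun k _ => ?_
    rw [tsum_mul_right, (wgen a k).2]


/-- `∑_{x=0}^∞ (e^{-a} a^x / x!) C_n^{(a)}(x-1) = (-1)^n`,
the series converging absolutely. -/
theorem charlier_shifted_sum (a : ℝ) (ha : 0 < a) (n : ℕ) :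
    Summable (fun x : ℕ => Real.exp (-a) * a ^ x / (Nat.factorial x : ℝ) *
      charlier a n ((x : ℝ) - 1)) ∧
    (∑' x : ℕ, Real.exp (-a) * a ^ x / (Nat.factorial x : ℝ) * charlier a n ((x : ℝ) - 1))
      = (-1 : ℝ) ^ n := by
  induction n with
  | zero =>
    simp only [charlier_zero, mul_one, pow_zero]
    have h := wgen a 0
    simp only [genChoose_zero, mul_one, pow_zero, Nat.factorial_zero, Nat.cast_one,
      div_one] at h
    exact h
  | succ n ih =>
    have hJ := wcharlier a (n + 1)
    have heq : ∀ x : ℕ, Real.exp (-a) * a ^ x / (Nat.factorial x : ℝ) *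
        charlier a (n + 1) ((x : ℝ) - 1)
        = Real.exp (-a) * a ^ x / (Nat.factorial x : ℝ) * charlier a (n + 1) (x : ℝ)
          - Real.exp (-a) * a ^ x / (Nat.factorial x : ℝ) * charlier a n ((x : ℝ) - 1) := by
      intro x
      rw [← charlier_sub a (x : ℝ) n]
      ring
    constructor
    · rw [show (fun x : ℕ => Real.exp (-a) * a ^ x / (Nat.factorial x : ℝ) *
          charlier a (n + 1) ((x : ℝ) - 1)) = _ from funext heq]
      exact hJ.1.sub ih.1
    · rw [tsum_congr heq, Summable.tsum_sub hJ.1 ih.1, hJ.2, ih.2]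
      simp [pow_succ]
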